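/- For every d ≥ 1, the spectral sensitivity of the recursive alternating AND-OR function (AND_2∘OR_2)^d : {0,1}^{4^d} → {0,1} equals 2^d; that is, the operator (spectral) norm of the adjacency matrix of the sensitivity graph of (AND_2∘OR_2)^d is exactly 2^d. -/

import Mathlib

open MvPolynomial Finset

/-- Embed a bit into ℝ. -/
def boolToReal (b : Bool) : ℝ := if b then 1 else 0

/-- Embed a Boolean point into ℝ^n. -/
def embed {n : ℕ} (x : Fin n → Bool) : Fin n → ℝ := fun i => boolToReal (x i)

/-- `p` ε-approximates `f` pointwise on the Boolean cube. -/
def IsApprox {n : ℕ} (ε : ℝ) (f : (Fin n → Bool) → Bool) (p : MvPolynomial (Fin n) ℝ) : Prop :=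
  ∀ x : Fin n → Bool, |MvPolynomial.eval (embed x) p - boolToReal (f x)| ≤ ε

/-- ε-approximate degree. -/
noncomputable def adegE {n : ℕ} (ε : ℝ) (f : (Fin n → Bool) → Bool) : ℕ :=
  sInf { d : ℕ | ∃ p : MvPolynomial (Fin n) ℝ, p.totalDegree ≤ d ∧ IsApprox ε f p }

/-- Approximate degree (ε = 1/3). -/
noncomputable def adeg {n : ℕ} (f : (Fin n → Bool) → Bool) : ℕ := adegE (1/3) f

/-- Block composition f ∘ g. -/
def bcomp {n m : ℕ} (f : (Fin n → Bool) → Bool) (g : (Fin m → Bool) → Bool) :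
    (Fin (n * m) → Bool) → Bool :=
  fun x => f fun i => g fun j => x (finProdFinEquiv (i, j))

/-- d-fold recursive composition h^d. -/
def recComp {k : ℕ} (h : (Fin k → Bool) → Bool) : (d : ℕ) → ((Fin (k ^ d) → Bool) → Bool)
  | 0 => fun x => x (Fin.cast (pow_zero k).symm 0)
  | d + 1 => fun x => bcomp h (recComp h d) fun i => x (Fin.cast (pow_succ' k d).symm i)

/-- Majority on t bits: 1 iff Hamming weight > t/2. -/
def MAJ (t : ℕ) : (Fin t → Bool) → Bool :=
  fun x => decide (t < 2 * (Finset.univ.filter fun i => x i = true).card)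

def ANDf (t : ℕ) : (Fin t → Bool) → Bool := fun x => decide (∀ i, x i = true)
def ORf (t : ℕ) : (Fin t → Bool) → Bool := fun x => decide (∃ i, x i = true)
def PARITYf (t : ℕ) : (Fin t → Bool) → Bool :=
  fun x => decide ((Finset.univ.filter fun i => x i = true).card % 2 = 1)

/-- (x₁ ∨ x₂) ∧ (x₃ ∨ x₄). -/
def ANDOR4 : (Fin 4 → Bool) → Bool := fun x => (x 0 || x 1) && (x 2 || x 3)

/-- Flip coordinate i of x. -/
def flip1 {t : ℕ} (x : Fin t → Bool) (i : Fin t) : Fin t → Bool :=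
  Function.update x i (!(x i))

/-- Adjacency matrix of the sensitivity graph of f. -/
def sensAdj {n : ℕ} (f : (Fin n → Bool) → Bool) :
    Matrix (Fin n → Bool) (Fin n → Bool) ℝ :=
  fun x y => if (∃ i : Fin n, y = flip1 x i) ∧ f x ≠ f y then 1 else 0

/-- Spectral (ℓ₂ operator) norm of a real square matrix. -/
noncomputable def specNorm {α : Type*} [Fintype α] [DecidableEq α] (A : Matrix α α ℝ) : ℝ :=
  ‖Matrix.toEuclideanCLM (𝕜 := ℝ) A‖

-- ===== auxiliary development =====

section Aux
open Finset

def sensSet {n : ℕ} (f : (Fin n → Bool) → Bool) (x : Fin n → Bool) : Finset (Fin n) :=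
  Finset.univ.filter fun i => f x ≠ f (flip1 x i)

lemma mem_sensSet {n : ℕ} {f : (Fin n → Bool) → Bool} {x : Fin n → Bool} {i : Fin n} :
    i ∈ sensSet f x ↔ f x ≠ f (flip1 x i) := by simp [sensSet]

lemma flip1_flip1 {t : ℕ} (x : Fin t → Bool) (i : Fin t) : flip1 (flip1 x i) i = x := by
  funext j
  by_cases h : j = i
  · subst h; simp [flip1]
  · simp [flip1, Function.update_of_ne h]

lemma flip1_inj {t : ℕ} (x : Fin t → Bool) : Function.Injective (flip1 x) := by
  intro i j h
  by_contra hij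
  have := congrFun h i
  simp [flip1, Function.update_of_ne (Ne.symm (hij ∘ Eq.symm))] at this

lemma sensAdj_mulVec {n : ℕ} (f : (Fin n → Bool) → Bool) (v : (Fin n → Bool) → ℝ)
    (x : Fin n → Bool) :
    (sensAdj f).mulVec v x = ∑ i ∈ sensSet f x, v (flip1 x i) := by
  classical
  have himg : (Finset.univ.filter (fun y => (∃ i, y = flip1 x i) ∧ f x ≠ f y))
      = (sensSet f x).image (flip1 x) := by
    ext y
    simp only [Finset.mem_filter, Finset.mem_image, Finset.mem_univ, true_and, sensSet]
    constructor
    · rintro ⟨⟨i, rfl⟩, hne⟩; exact ⟨i, hne, rfl⟩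
    · rintro ⟨i, hne, rfl⟩; exact ⟨⟨i, rfl⟩, hne⟩
  calc (sensAdj f).mulVec v x
      = ∑ y, if (∃ i, y = flip1 x i) ∧ f x ≠ f y then v y else 0 := by
        unfold Matrix.mulVec dotProduct sensAdj
        exact Finset.sum_congr rfl fun y _ => by
          by_cases h : (∃ i, y = flip1 x i) ∧ f x ≠ f y <;> simp [h]
    _ = ∑ y ∈ Finset.univ.filter (fun y => (∃ i, y = flip1 x i) ∧ f x ≠ f y), v y :=
        (Finset.sum_filter _ _).symm
    _ = ∑ i ∈ sensSet f x, v (flip1 x i) := by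
        rw [himg, Finset.sum_image (fun a _ b _ h => flip1_inj x h)]

lemma sensAdj_symm {n : ℕ} (f : (Fin n → Bool) → Bool) (x y : Fin n → Bool) :
    sensAdj f x y = sensAdj f y x := by
  unfold sensAdj
  congr 1
  apply propext
  constructor
  · rintro ⟨⟨i, rfl⟩, hne⟩
    exact ⟨⟨i, (flip1_flip1 x i).symm⟩, hne.symm⟩
  · rintro ⟨⟨i, rfl⟩, hne⟩
    exact ⟨⟨i, (flip1_flip1 y i).symm⟩, hne.symm⟩

lemma sensAdj_nonneg {n : ℕ} (f : (Fin n → Bool) → Bool) (x y : Fin n → Bool) :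
    0 ≤ sensAdj f x y := by
  unfold sensAdj; split <;> norm_num

lemma sensAdj_rowsum {n : ℕ} (f : (Fin n → Bool) → Bool) (x : Fin n → Bool) :
    ∑ y, sensAdj f x y = ((sensSet f x).card : ℝ) := by
  have h := sensAdj_mulVec f (fun _ => 1) x
  unfold Matrix.mulVec dotProduct at h
  simpa using h

section SpecNorm
variable {α : Type*} [Fintype α] [DecidableEq α]

lemma specNorm_le_of_rowsum (A : Matrix α α ℝ) (hsym : ∀ x y, A x y = A y x)
    (hpos : ∀ x y, 0 ≤ A x y) (C : ℝ) (hC : 0 ≤ C) (hrow : ∀ x, ∑ y, A x y ≤ C) :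
    specNorm A ≤ C := by
  apply ContinuousLinearMap.opNorm_le_bound _ hC
  intro v
  set w : α → ℝ := WithLp.equiv 2 (α → ℝ) v with hw
  have hveq : (WithLp.equiv 2 (α → ℝ)).symm w = v := by simp [hw]
  have happ : Matrix.toEuclideanCLM (𝕜 := ℝ) A v
      = (WithLp.equiv 2 (α → ℝ)).symm (A.mulVec w) := by
    rw [← hveq]; rfl
  have hcol : ∀ y, ∑ x, A x y ≤ C := by
    intro y
    calc ∑ x, A x y = ∑ x, A y x :=
          Finset.sum_congr rfl fun x _ => hsym x y
      _ ≤ C := hrow y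
  have key : ∑ x, (A.mulVec w x) ^ 2 ≤ C ^ 2 * ∑ y, w y ^ 2 := by
    have h1 : ∀ x, (A.mulVec w x) ^ 2 ≤ C * ∑ y, A x y * w y ^ 2 := by
      intro x
      have hcs := Finset.sum_mul_sq_le_sq_mul_sq Finset.univ
        (fun y => Real.sqrt (A x y)) (fun y => Real.sqrt (A x y) * w y)
      have h2 : (∑ y, Real.sqrt (A x y) * (Real.sqrt (A x y) * w y)) = A.mulVec w x := by
        unfold Matrix.mulVec dotProduct
        refine Finset.sum_congr rfl fun y _ => ?_
        rw [← mul_assoc, Real.mul_self_sqrt (hpos x y)]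
      have h3 : (∑ y, Real.sqrt (A x y) ^ 2) = ∑ y, A x y :=
        Finset.sum_congr rfl fun y _ => Real.sq_sqrt (hpos x y)
      have h4 : (∑ y, (Real.sqrt (A x y) * w y) ^ 2) = ∑ y, A x y * w y ^ 2 := by
        refine Finset.sum_congr rfl fun y _ => ?_
        rw [mul_pow, Real.sq_sqrt (hpos x y)]
      rw [h2, h3, h4] at hcs
      calc (A.mulVec w x) ^ 2 ≤ (∑ y, A x y) * ∑ y, A x y * w y ^ 2 := hcs
        _ ≤ C * ∑ y, A x y * w y ^ 2 := by
            apply mul_le_mul_of_nonneg_right (hrow x)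
            exact Finset.sum_nonneg fun y _ => mul_nonneg (hpos x y) (sq_nonneg _)
    calc ∑ x, (A.mulVec w x) ^ 2 ≤ ∑ x, C * ∑ y, A x y * w y ^ 2 :=
          Finset.sum_le_sum fun x _ => h1 x
      _ = C * ∑ y, (∑ x, A x y) * w y ^ 2 := by
          rw [← Finset.mul_sum, Finset.sum_comm]
          congr 1
          exact Finset.sum_congr rfl fun y _ => (Finset.sum_mul _ _ _).symm
      _ ≤ C * ∑ y, C * w y ^ 2 := by
          apply mul_le_mul_of_nonneg_left _ hC
          exact Finset.sum_le_sum fun y _ =>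
            mul_le_mul_of_nonneg_right (hcol y) (sq_nonneg _)
      _ = C ^ 2 * ∑ y, w y ^ 2 := by rw [← Finset.mul_sum]; ring
  have hnv : ‖v‖ = Real.sqrt (∑ y, w y ^ 2) := by
    rw [EuclideanSpace.norm_eq]
    congr 1
    exact Finset.sum_congr rfl fun y _ => by rw [Real.norm_eq_abs, sq_abs]; rfl
  have hnAv : ‖Matrix.toEuclideanCLM (𝕜 := ℝ) A v‖
      = Real.sqrt (∑ x, (A.mulVec w x) ^ 2) := by
    rw [happ, EuclideanSpace.norm_eq]
    congr 1
    exact Finset.sum_congr rfl fun x _ => by rw [Real.norm_eq_abs, sq_abs]; rfl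
  rw [hnAv, hnv]
  calc Real.sqrt (∑ x, (A.mulVec w x) ^ 2) ≤ Real.sqrt (C ^ 2 * ∑ y, w y ^ 2) :=
        Real.sqrt_le_sqrt key
    _ = C * Real.sqrt (∑ y, w y ^ 2) := by
        rw [Real.sqrt_mul (sq_nonneg C), Real.sqrt_sq hC]

lemma le_specNorm_of_eigen (A : Matrix α α ℝ) (lam : ℝ) (hlam : 0 ≤ lam)
    (v : α → ℝ) (hv : v ≠ 0) (heig : A.mulVec v = lam • v) :
    lam ≤ specNorm A := by
  set u : EuclideanSpace ℝ α := (WithLp.equiv 2 (α → ℝ)).symm v with hu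
  have happ : Matrix.toEuclideanCLM (𝕜 := ℝ) A u = lam • u := by
    rw [hu, WithLp.equiv_symm_apply, Matrix.toEuclideanCLM_toLp, heig]
    rfl
  have hu0 : u ≠ 0 := by
    intro h
    apply hv
    funext x
    exact congrFun (congrArg (WithLp.equiv 2 (α → ℝ)) h) x
  have h1 : ‖Matrix.toEuclideanCLM (𝕜 := ℝ) A u‖ ≤ specNorm A * ‖u‖ :=
    (Matrix.toEuclideanCLM (𝕜 := ℝ) A).le_opNorm u
  rw [happ, norm_smul, Real.norm_eq_abs, abs_of_nonneg hlam] at h1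
  exact le_of_mul_le_mul_right h1 (norm_pos_iff.mpr hu0)

end SpecNorm

section Comp
variable {n m N : ℕ} (E : Fin n × Fin m ≃ Fin N)
  (f : (Fin n → Bool) → Bool) (g : (Fin m → Bool) → Bool)

def blk (x : Fin N → Bool) (i : Fin n) : Fin m → Bool := fun j => x (E (i, j))

def innerZ (x : Fin N → Bool) : Fin n → Bool := fun i => g (blk E x i)

def theF : (Fin N → Bool) → Bool := fun x => f (innerZ E g x)

lemma blk_flip (x : Fin N → Bool) (i : Fin n) (j : Fin m) :
    blk E (flip1 x (E (i, j))) = Function.update (blk E x) i (flip1 (blk E x i) j) := by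
  funext i' j'
  unfold blk flip1
  by_cases hi : i' = i
  · subst hi
    by_cases hj : j' = j
    · subst hj; simp
    · have : E (i', j') ≠ E (i', j) := fun h => hj (congrArg Prod.snd (E.injective h))
      rw [Function.update_of_ne this, Function.update_self, Function.update_of_ne hj]
  · have : E (i', j') ≠ E (i, j) := fun h => hi (congrArg Prod.fst (E.injective h))
    rw [Function.update_of_ne this, Function.update_of_ne hi]

lemma innerZ_flip (x : Fin N → Bool) (i : Fin n) (j : Fin m) :
    innerZ E g (flip1 x (E (i, j)))
      = Function.update (innerZ E g x) i (g (flip1 (blk E x i) j)) := by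
  funext i'
  unfold innerZ
  rw [blk_flip]
  by_cases hi : i' = i
  · subst hi; simp
  · rw [Function.update_of_ne hi, Function.update_of_ne hi]

lemma innerZ_flip_sens (x : Fin N → Bool) (i : Fin n) (j : Fin m)
    (hj : j ∈ sensSet g (blk E x i)) :
    innerZ E g (flip1 x (E (i, j))) = flip1 (innerZ E g x) i := by
  rw [innerZ_flip]
  have hne := mem_sensSet.mp hj
  have hval : g (flip1 (blk E x i) j) = !(g (blk E x i)) := by
    cases h1 : g (blk E x i) <;> cases h2 : g (flip1 (blk E x i) j) <;> simp_all
  rw [hval]; rfl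

lemma innerZ_flip_nonsens (x : Fin N → Bool) (i : Fin n) (j : Fin m)
    (hj : j ∉ sensSet g (blk E x i)) :
    innerZ E g (flip1 x (E (i, j))) = innerZ E g x := by
  rw [innerZ_flip]
  have hne := mem_sensSet.not.mp hj
  have h : g (flip1 (blk E x i) j) = g (blk E x i) := by
    by_contra hc
    exact hne fun h => hc h.symm
  rw [h]
  exact Function.update_eq_self i (innerZ E g x)

lemma mem_sensSet_theF (x : Fin N → Bool) (i : Fin n) (j : Fin m) :
    E (i, j) ∈ sensSet (theF E f g) x
      ↔ j ∈ sensSet g (blk E x i) ∧ i ∈ sensSet f (innerZ E g x) := by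
  by_cases hj : j ∈ sensSet g (blk E x i)
  · simp only [hj, true_and]
    rw [mem_sensSet, mem_sensSet]
    unfold theF
    rw [innerZ_flip_sens E g x i j hj]
  · simp only [hj, false_and, iff_false]
    rw [mem_sensSet]
    unfold theF
    rw [innerZ_flip_nonsens E g x i j hj]
    simp

lemma sensSet_theF (x : Fin N → Bool) :
    sensSet (theF E f g) x
      = (sensSet f (innerZ E g x)).biUnion
          (fun i => (sensSet g (blk E x i)).image (fun j => E (i, j))) := by
  ext k
  obtain ⟨⟨i, j⟩, rfl⟩ := E.surjective k
  rw [mem_sensSet_theF]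
  simp only [Finset.mem_biUnion, Finset.mem_image]
  constructor
  · rintro ⟨hj, hi⟩; exact ⟨i, hi, j, hj, rfl⟩
  · rintro ⟨i', hi', j', hj', hE⟩
    obtain ⟨h1, h2⟩ : i' = i ∧ j' = j := by
      have := E.injective hE; exact ⟨congrArg Prod.fst this, congrArg Prod.snd this⟩
    subst h1; subst h2
    exact ⟨hj', hi'⟩

lemma card_sensSet_theF_le (a b : ℕ)
    (hg : ∀ y, (sensSet g y).card ≤ a) (hf : ∀ z, (sensSet f z).card ≤ b)
    (x : Fin N → Bool) : (sensSet (theF E f g) x).card ≤ b * a := by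
  rw [sensSet_theF]
  calc (Finset.biUnion (sensSet f (innerZ E g x))
        (fun i => (sensSet g (blk E x i)).image (fun j => E (i, j)))).card
      ≤ ∑ i ∈ sensSet f (innerZ E g x),
          ((sensSet g (blk E x i)).image (fun j => E (i, j))).card :=
        Finset.card_biUnion_le
    _ ≤ ∑ i ∈ sensSet f (innerZ E g x), a := by
        refine Finset.sum_le_sum fun i _ => ?_
        exact le_trans Finset.card_image_le (hg _)
    _ = (sensSet f (innerZ E g x)).card * a := by
        rw [Finset.sum_const, smul_eq_mul]
    _ ≤ b * a := Nat.mul_le_mul_right a (hf _)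

lemma eigen_theF (t : (Fin m → Bool) → ℝ) (u : (Fin n → Bool) → ℝ) (μ ν : ℝ)
    (ht : ∀ y, ∑ j ∈ sensSet g y, t (flip1 y j) = μ * t y)
    (hu : ∀ z, ∑ i ∈ sensSet f z, u (flip1 z i) = ν * u z)
    (x : Fin N → Bool) :
    ∑ k ∈ sensSet (theF E f g) x,
        (u (innerZ E g (flip1 x k)) * ∏ i, t (blk E (flip1 x k) i))
      = (μ * ν) * (u (innerZ E g x) * ∏ i, t (blk E x i)) := by
  rw [sensSet_theF]
  rw [Finset.sum_biUnion]
  · have hterm : ∀ i ∈ sensSet f (innerZ E g x),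
        (∑ k ∈ (sensSet g (blk E x i)).image (fun j => E (i, j)),
          (u (innerZ E g (flip1 x k)) * ∏ i', t (blk E (flip1 x k) i')))
        = μ * (u (flip1 (innerZ E g x) i) * ∏ i', t (blk E x i')) := by
      intro i _
      rw [Finset.sum_image (fun j1 _ j2 _ h => congrArg Prod.snd (E.injective h))]
      have hstep : ∀ j ∈ sensSet g (blk E x i),
          (u (innerZ E g (flip1 x (E (i, j)))) * ∏ i', t (blk E (flip1 x (E (i, j))) i'))
          = u (flip1 (innerZ E g x) i) *
              (t (flip1 (blk E x i) j) * ∏ i' ∈ Finset.univ.erase i, t (blk E x i')) := by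
        intro j hj
        rw [innerZ_flip_sens E g x i j hj, blk_flip]
        congr 1
        rw [← Finset.mul_prod_erase Finset.univ _ (Finset.mem_univ i)]
        congr 1
        · rw [Function.update_self]
        · exact Finset.prod_congr rfl fun i' hi' => by
            rw [Function.update_of_ne (Finset.ne_of_mem_erase hi')]
      rw [Finset.sum_congr rfl hstep]
      simp only [← mul_assoc]
      rw [← Finset.sum_mul, ← Finset.mul_sum, ht,
        ← Finset.mul_prod_erase Finset.univ (fun i' => t (blk E x i')) (Finset.mem_univ i)]
      ring
    rw [Finset.sum_congr rfl hterm, ← Finset.mul_sum, ← Finset.sum_mul, hu]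
    ring
  · intro i1 h1 i2 h2 hne
    simp only [Finset.disjoint_left, Finset.mem_image]
    rintro k ⟨j1, _, rfl⟩ ⟨j2, _, hk⟩
    exact hne (congrArg Prod.fst (E.injective hk.symm))

def pickPoint (zp : Fin n → Bool) (a b : Fin m → Bool) : Fin N → Bool :=
  fun k => (bif zp (E.symm k).1 then b else a) (E.symm k).2

lemma blk_pickPoint (zp : Fin n → Bool) (a b : Fin m → Bool) (i : Fin n) :
    blk E (pickPoint E zp a b) i = bif zp i then b else a := by
  funext j
  unfold blk pickPoint
  simp

lemma innerZ_pickPoint (zp : Fin n → Bool) (a b : Fin m → Bool)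
    (ga : g a = false) (gb : g b = true) :
    innerZ E g (pickPoint E zp a b) = zp := by
  funext i
  unfold innerZ
  rw [blk_pickPoint]
  cases h : zp i <;> simp [h, ga, gb]

end Comp
end Aux
-- ===== base case data for ANDOR4 =====
section Base
open Finset

def comp8 (z : Fin 4 → Bool) : Bool :=
  (!(z 0 && z 1)) && (!(z 2 && z 3)) && (z 0 || z 1 || z 2 || z 3)

noncomputable def u8 : (Fin 4 → Bool) → ℝ := fun z => if comp8 z then 1 else 0

lemma andor4_card : ∀ z : Fin 4 → Bool, (sensSet ANDOR4 z).card ≤ 2 := by decide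

lemma andor4_eigen_nat : ∀ z : Fin 4 → Bool,
    ((sensSet ANDOR4 z).filter (fun i => comp8 (flip1 z i))).card
      = 2 * (if comp8 z then 1 else 0) := by decide

lemma andor4_eigen : ∀ z : Fin 4 → Bool,
    ∑ i ∈ sensSet ANDOR4 z, u8 (flip1 z i) = 2 * u8 z := by
  intro z
  have h1 : ∑ i ∈ sensSet ANDOR4 z, u8 (flip1 z i)
      = (((sensSet ANDOR4 z).filter (fun i => comp8 (flip1 z i))).card : ℝ) := by
    unfold u8
    rw [Finset.sum_boole]
  rw [h1, andor4_eigen_nat z]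
  unfold u8
  cases h : comp8 z <;> simp [h]

lemma rec0_card : ∀ x : Fin (4 ^ 0) → Bool, (sensSet (recComp ANDOR4 0) x).card = 1 := by
  decide

lemma rec0_eigen : ∀ x : Fin (4 ^ 0) → Bool,
    ∑ i ∈ sensSet (recComp ANDOR4 0) x, (fun _ => (1 : ℝ)) (flip1 x i)
      = (2 ^ 0 : ℝ) * (fun _ => (1 : ℝ)) x := by
  intro x
  rw [Finset.sum_const, rec0_card x]
  norm_num

end Base

-- ===== the induction =====
section Induction
open Finset

def GoodProp (d : ℕ) : Prop :=
  (∀ x, (sensSet (recComp ANDOR4 d) x).card ≤ 2 ^ d) ∧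
  ∃ v : (Fin (4 ^ d) → Bool) → ℝ, ∃ a b : Fin (4 ^ d) → Bool,
    (∀ x, ∑ i ∈ sensSet (recComp ANDOR4 d) x, v (flip1 x i) = (2 ^ d : ℝ) * v x) ∧
    recComp ANDOR4 d a = false ∧ recComp ANDOR4 d b = true ∧ v a ≠ 0 ∧ v b ≠ 0

lemma good_zero : GoodProp 0 := by
  constructor
  · intro x; rw [rec0_card x]; norm_num
  · refine ⟨fun _ => 1, (fun _ => false), (fun _ => true), rec0_eigen, ?_, ?_, ?_, ?_⟩
    · rfl
    · rfl
    · norm_num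
    · norm_num

lemma recComp_succ_eq (d : ℕ) :
    recComp ANDOR4 (d + 1)
      = theF (finProdFinEquiv.trans (finCongr (pow_succ' 4 d).symm)) ANDOR4
          (recComp ANDOR4 d) := rfl

lemma good_step (d : ℕ) (hd : GoodProp d) : GoodProp (d + 1) := by
  obtain ⟨hcard, v, a, b, heig, hfa, hgb, hva, hvb⟩ := hd
  set E : Fin 4 × Fin (4 ^ d) ≃ Fin (4 ^ (d + 1)) :=
    finProdFinEquiv.trans (finCongr (pow_succ' 4 d).symm) with hE
  unfold GoodProp
  rw [recComp_succ_eq d]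
  constructor
  · intro x
    have := card_sensSet_theF_le E ANDOR4 (recComp ANDOR4 d) (2 ^ d) 2 hcard andor4_card x
    calc (sensSet (theF E ANDOR4 (recComp ANDOR4 d)) x).card ≤ 2 * 2 ^ d := this
      _ = 2 ^ (d + 1) := (pow_succ' 2 d).symm
  · refine ⟨fun y => u8 (innerZ E (recComp ANDOR4 d) y) *
        ∏ i, v (blk E y i),
      pickPoint E ![true, false, false, false] a b,
      pickPoint E ![true, false, true, false] a b, ?_, ?_, ?_, ?_, ?_⟩
    · intro x
      have := eigen_theF E ANDOR4 (recComp ANDOR4 d) v u8 (2 ^ d) 2 heig andor4_eigen x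
      rw [this]
      dsimp only
      ring
    · show ANDOR4 (innerZ E (recComp ANDOR4 d) _) = false
      rw [innerZ_pickPoint E (recComp ANDOR4 d) _ a b hfa hgb]
      rfl
    · show ANDOR4 (innerZ E (recComp ANDOR4 d) _) = true
      rw [innerZ_pickPoint E (recComp ANDOR4 d) _ a b hfa hgb]
      rfl
    · dsimp only
      rw [innerZ_pickPoint E (recComp ANDOR4 d) _ a b hfa hgb]
      apply mul_ne_zero
      · show u8 ![true, false, false, false] ≠ 0
        unfold u8
        norm_num [comp8]
        decide
      · rw [Finset.prod_ne_zero_iff]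
        intro i _
        rw [blk_pickPoint]
        cases h : (![true, false, false, false] : Fin 4 → Bool) i <;> simpa using (by assumption)
    · dsimp only
      rw [innerZ_pickPoint E (recComp ANDOR4 d) _ a b hfa hgb]
      apply mul_ne_zero
      · show u8 ![true, false, true, false] ≠ 0
        unfold u8
        norm_num [comp8]
        decide
      · rw [Finset.prod_ne_zero_iff]
        intro i _
        rw [blk_pickPoint]
        cases h : (![true, false, true, false] : Fin 4 → Bool) i <;> simpa using (by assumption)

lemma good_all (d : ℕ) : GoodProp d := by
  induction d with
  | zero => exact good_zero
  | succ d ih => exact good_step d ih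

end Induction

/-- the spectral sensitivity of (AND₂∘OR₂)^d equals 2^d. -/
theorem stmt_18 : ∀ d : ℕ, 1 ≤ d →
    specNorm (sensAdj (recComp ANDOR4 d)) = 2 ^ d := by
  intro d _
  obtain ⟨hcard, v, a, b, heig, hfa, hgb, hva, hvb⟩ := good_all d
  apply le_antisymm
  · apply specNorm_le_of_rowsum _ (sensAdj_symm _) (sensAdj_nonneg _) _ (by positivity)
    intro x
    rw [sensAdj_rowsum]
    calc ((sensSet (recComp ANDOR4 d) x).card : ℝ) ≤ ((2 ^ d : ℕ) : ℝ) :=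
          Nat.cast_le.mpr (hcard x)
      _ = 2 ^ d := by push_cast; ring
  · apply le_specNorm_of_eigen _ _ (by positivity) v (fun h => hva (congrFun h a))
    funext x
    rw [sensAdj_mulVec, heig]
    simp
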